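/- Let f : Δ → Δ be a holomorphic self-map of the open unit disc, and let (z_k) be a sequence in Δ converging to 1 nontangentially such that f(z_k) = z_k + o(|z_k - 1|³) as k → ∞ (i.e. (f(z_k) - z_k)/|z_k - 1|³ → 0). Then f(z) = z for every z ∈ Δ. -/

import Mathlib

/-!
Nontangential approach turns `f (z k) - z k = o(‖1 - z k‖)` into `o(1 - ‖z k‖)`, so the ratio
`(1 - ‖f (z k)‖ ^ 2) / (1 - ‖z k‖ ^ 2)` tends to `1` and Julia's lemma gives
`Re K(w) ≤ Re K(f w)` for the Cayley transform `K u = (1 + u) / (1 - u)`. Hence `g = K ∘ f - K` is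
holomorphic with nonnegative real part, and the cubic contact makes
`g (z k) = o(‖1 - z k‖) = o(1 - ‖z k‖)` along the nontangential sequence. If `Re g > 0`, the
Schwarz–Pick lemma applied to the Cayley transform of `g` gives `Re g z ≥ c (1 - ‖z‖)`, which is
impossible; by the open mapping theorem `g` is therefore constant, hence `0`, and `f = id`.
-/

open Metric Filter Asymptotics Topology

open scoped ComplexConjugate

namespace Complex

noncomputable def blaschke (a z : ℂ) : ℂ := (z - a) / (1 - conj a * z)

theorem one_sub_conj_mul_ne_zero {a z : ℂ} (ha : ‖a‖ < 1) (hz : ‖z‖ ≤ 1) :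
    1 - conj a * z ≠ 0 := by
  rw [sub_ne_zero]
  intro h
  have : ‖conj a * z‖ < 1 := by
    rw [norm_mul, norm_conj]
    nlinarith [norm_nonneg a, norm_nonneg z]
  rw [← h, norm_one] at this
  exact this.false

theorem sq_norm_one_sub_conj_mul_sub_sq_norm_sub (a z : ℂ) :
    ‖1 - conj a * z‖ ^ 2 - ‖z - a‖ ^ 2 = (1 - ‖a‖ ^ 2) * (1 - ‖z‖ ^ 2) := by
  simp only [Complex.sq_norm, normSq_apply, sub_re, sub_im, mul_re, mul_im, one_re, one_im,
    conj_re, conj_im]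
  ring

theorem one_sub_sq_norm_blaschke {a z : ℂ} (h : 1 - conj a * z ≠ 0) :
    1 - ‖blaschke a z‖ ^ 2 = (1 - ‖a‖ ^ 2) * (1 - ‖z‖ ^ 2) / ‖1 - conj a * z‖ ^ 2 := by
  rw [← sq_norm_one_sub_conj_mul_sub_sq_norm_sub, blaschke, norm_div, div_pow, sub_div,
    div_self (by positivity)]

theorem norm_blaschke_lt_one {a z : ℂ} (ha : ‖a‖ < 1) (hz : ‖z‖ < 1) :
    ‖blaschke a z‖ < 1 := by
  have h := one_sub_conj_mul_ne_zero ha hz.le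
  have hpos : 0 < 1 - ‖blaschke a z‖ ^ 2 := by
    rw [one_sub_sq_norm_blaschke h]
    have : 0 < 1 - ‖a‖ ^ 2 := by nlinarith [norm_nonneg a]
    have : 0 < 1 - ‖z‖ ^ 2 := by nlinarith [norm_nonneg z]
    positivity
  nlinarith [norm_nonneg (blaschke a z)]

theorem mapsTo_blaschke {a : ℂ} (ha : ‖a‖ < 1) :
    Set.MapsTo (blaschke a) (ball 0 1) (ball 0 1) := fun z hz => by
  rw [mem_ball_zero_iff] at hz ⊢
  exact norm_blaschke_lt_one ha hz

theorem differentiableOn_blaschke {a : ℂ} (ha : ‖a‖ < 1) :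
    DifferentiableOn ℂ (blaschke a) (ball 0 1) := by
  refine (differentiableOn_id.sub_const a).div
    ((differentiableOn_const 1).sub (differentiableOn_id.const_mul _)) fun z hz => ?_
  exact one_sub_conj_mul_ne_zero ha (mem_ball_zero_iff.mp hz).le

@[simp]
theorem blaschke_self (a : ℂ) : blaschke a a = 0 := by
  simp [blaschke]

@[simp]
theorem blaschke_zero_right (a : ℂ) : blaschke a 0 = -a := by
  simp [blaschke]

theorem blaschke_neg_blaschke {a z : ℂ} (ha : ‖a‖ < 1) (hz : ‖z‖ < 1) :
    blaschke (-a) (blaschke a z) = z := by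
  have h : 1 - z * conj a ≠ 0 := mul_comm (conj a) z ▸ one_sub_conj_mul_ne_zero ha hz.le
  have h' : 1 - conj (-a) * blaschke a z ≠ 0 :=
    one_sub_conj_mul_ne_zero (by rwa [norm_neg]) (norm_blaschke_lt_one ha hz).le
  rw [blaschke, map_neg] at h'
  rw [blaschke, blaschke, map_neg, div_eq_iff h']
  field_simp
  ring

theorem norm_blaschke_apply_le_norm_blaschke {f : ℂ → ℂ} (hf : DifferentiableOn ℂ f (ball 0 1))
    (hmap : Set.MapsTo f (ball 0 1) (ball 0 1)) {a z : ℂ} (ha : a ∈ ball 0 1)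
    (hz : z ∈ ball 0 1) : ‖blaschke (f a) (f z)‖ ≤ ‖blaschke a z‖ := by
  rw [mem_ball_zero_iff] at ha hz
  have ha' : ‖-a‖ < 1 := by rwa [norm_neg]
  have hfa : ‖f a‖ < 1 := mem_ball_zero_iff.mp (hmap (mem_ball_zero_iff.mpr ha))
  let g := blaschke (f a) ∘ f ∘ blaschke (-a)
  have hg : DifferentiableOn ℂ g (ball 0 1) :=
    (differentiableOn_blaschke hfa).comp (hf.comp (differentiableOn_blaschke ha')
      (mapsTo_blaschke ha')) (hmap.comp (mapsTo_blaschke ha'))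
  have hgmap : Set.MapsTo g (ball 0 1) (closedBall 0 1) :=
    ((mapsTo_blaschke hfa).comp (hmap.comp (mapsTo_blaschke ha'))).mono_right
      ball_subset_closedBall
  have hg0 : g 0 = 0 := by simp [g]
  simpa [g, blaschke_neg_blaschke ha hz] using
    norm_le_norm_of_mapsTo_ball hg hgmap hg0 (norm_blaschke_lt_one ha hz)

theorem schwarz_pick {f : ℂ → ℂ} (hf : DifferentiableOn ℂ f (ball 0 1))
    (hmap : Set.MapsTo f (ball 0 1) (ball 0 1)) {a z : ℂ} (ha : a ∈ ball 0 1)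
    (hz : z ∈ ball 0 1) :
    (1 - ‖a‖ ^ 2) * (1 - ‖z‖ ^ 2) / ‖1 - conj a * z‖ ^ 2 ≤
      (1 - ‖f a‖ ^ 2) * (1 - ‖f z‖ ^ 2) / ‖1 - conj (f a) * f z‖ ^ 2 := by
  have hfa := mem_ball_zero_iff.mp (hmap ha)
  have hfz := mem_ball_zero_iff.mp (hmap hz)
  have hρ := norm_blaschke_apply_le_norm_blaschke hf hmap ha hz
  rw [mem_ball_zero_iff] at ha hz
  rw [← one_sub_sq_norm_blaschke (one_sub_conj_mul_ne_zero ha hz.le),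
    ← one_sub_sq_norm_blaschke (one_sub_conj_mul_ne_zero hfa hfz.le), sub_le_sub_iff_left]
  gcongr

noncomputable def cayley (u : ℂ) : ℂ := (1 + u) / (1 - u)

theorem ne_one_of_mem_ball {u : ℂ} (hu : u ∈ ball (0 : ℂ) 1) : u ≠ 1 :=
  ne_of_mem_of_not_mem hu (by simp)

theorem re_cayley (u : ℂ) : (cayley u).re = (1 - ‖u‖ ^ 2) / ‖1 - u‖ ^ 2 := by
  rw [cayley, div_re, ← add_div, Complex.sq_norm, Complex.sq_norm]
  congr 1
  simp only [add_re, add_im, sub_re, sub_im, one_re, one_im, normSq_apply]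
  ring

theorem cayley_sub_cayley {u v : ℂ} (hu : u ≠ 1) (hv : v ≠ 1) :
    cayley v - cayley u = 2 * (v - u) * ((1 - v) * (1 - u))⁻¹ := by
  have hu' : 1 - u ≠ 0 := sub_ne_zero.mpr hu.symm
  have hv' : 1 - v ≠ 0 := sub_ne_zero.mpr hv.symm
  rw [cayley, cayley]
  field_simp
  ring

theorem differentiableOn_cayley : DifferentiableOn ℂ cayley (ball 0 1) :=
  ((differentiableOn_const 1).add differentiableOn_id).div
    ((differentiableOn_const 1).sub differentiableOn_id) fun _ hu =>
      sub_ne_zero.mpr (ne_one_of_mem_ball hu).symm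

theorem one_sub_sq_norm_sub_one_div_add_one {w : ℂ} (hw : w + 1 ≠ 0) :
    1 - ‖(w - 1) / (w + 1)‖ ^ 2 = 4 * w.re / ‖w + 1‖ ^ 2 := by
  have hpos : 0 < ‖w + 1‖ ^ 2 := by positivity
  rw [norm_div, div_pow, one_sub_div hpos.ne', Complex.sq_norm, Complex.sq_norm]
  congr 1
  simp only [add_re, add_im, sub_re, sub_im, one_re, one_im, normSq_apply]
  ring

/-- Julia's lemma, written with the Poisson kernel `(cayley w).re` at `1`, whose superlevel sets
are the horodiscs at `1`. -/
theorem re_cayley_le_mul_re_cayley_apply {ι : Type*} {l : Filter ι} [l.NeBot] {f : ℂ → ℂ}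
    (hf : DifferentiableOn ℂ f (ball 0 1)) (hmap : Set.MapsTo f (ball 0 1) (ball 0 1))
    {z : ι → ℂ} (hz : ∀ i, z i ∈ ball 0 1) (hz1 : Tendsto z l (𝓝 1))
    (hfz1 : Tendsto (fun i => f (z i)) l (𝓝 1)) {L : ℝ}
    (hL : Tendsto (fun i => (1 - ‖f (z i)‖ ^ 2) / (1 - ‖z i‖ ^ 2)) l (𝓝 L))
    {w : ℂ} (hw : w ∈ ball 0 1) : (cayley w).re ≤ L * (cayley (f w)).re := by
  have hne : ∀ u ∈ ball (0 : ℂ) 1, ‖1 - u‖ ^ 2 ≠ 0 := fun u hu =>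
    pow_ne_zero 2 (norm_ne_zero_iff.mpr (sub_ne_zero.mpr (ne_one_of_mem_ball hu).symm))
  have hlim : ∀ (c : ℂ) (u : ι → ℂ), Tendsto u l (𝓝 1) →
      Tendsto (fun i => ‖1 - conj (u i) * c‖ ^ 2) l (𝓝 (‖1 - c‖ ^ 2)) := fun c u hu => by
    have hcont : Continuous fun a : ℂ => ‖1 - conj a * c‖ ^ 2 := by fun_prop
    simpa [Function.comp_def] using (hcont.tendsto 1).comp hu
  have hpick : ∀ i, (1 - ‖w‖ ^ 2) / ‖1 - conj (z i) * w‖ ^ 2 ≤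
      (1 - ‖f (z i)‖ ^ 2) / (1 - ‖z i‖ ^ 2) *
        ((1 - ‖f w‖ ^ 2) / ‖1 - conj (f (z i)) * f w‖ ^ 2) := fun i => by
    have hzi : 0 < 1 - ‖z i‖ ^ 2 := by
      have := mem_ball_zero_iff.mp (hz i)
      nlinarith [norm_nonneg (z i)]
    have := div_le_div_of_nonneg_right (schwarz_pick hf hmap (hz i) hw) hzi.le
    rw [mul_div_assoc, mul_div_cancel_left₀ _ hzi.ne'] at this
    exact this.trans_eq (by ring)
  rw [re_cayley, re_cayley]
  exact le_of_tendsto_of_tendsto' (tendsto_const_nhds.div (hlim w z hz1) (hne w hw))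
    (hL.mul (tendsto_const_nhds.div (hlim (f w) _ hfz1) (hne _ (hmap hw)))) hpick

theorem tendsto_one_sub_sq_norm_div_one_sub_sq_norm {ι : Type*} {l : Filter ι} {u v : ι → ℂ}
    (hu : ∀ i, ‖u i‖ < 1) (hv : ∀ i, ‖v i‖ ≤ 1)
    (h : (fun i => v i - u i) =o[l] fun i => 1 - ‖u i‖) :
    Tendsto (fun i => (1 - ‖v i‖ ^ 2) / (1 - ‖u i‖ ^ 2)) l (𝓝 1) := by
  have hsq : ∀ i, 1 - ‖u i‖ ≤ 1 - ‖u i‖ ^ 2 := fun i => by nlinarith [norm_nonneg (u i), hu i]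
  have hnum : (fun i => ‖u i‖ ^ 2 - ‖v i‖ ^ 2) =O[l] fun i => v i - u i :=
    isBigO_of_le' (c := 2) l fun i => by
      rw [Real.norm_eq_abs, sq_sub_sq, abs_mul, norm_sub_rev, abs_of_nonneg (by positivity)]
      gcongr
      · linarith [hu i, hv i]
      · exact abs_norm_sub_norm_le _ _
  have hden : (fun i => 1 - ‖u i‖) =O[l] fun i => 1 - ‖u i‖ ^ 2 :=
    isBigO_of_le l fun i => by
      rw [Real.norm_of_nonneg (by linarith [hu i]),
        Real.norm_of_nonneg (by linarith [hsq i, hu i])]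
      exact hsq i
  have := ((hnum.trans_isLittleO (h.trans_isBigO hden)).tendsto_div_nhds_zero).const_add 1
  rw [add_zero] at this
  refine this.congr fun i => ?_
  have : 1 - ‖u i‖ ^ 2 ≠ 0 := by linarith [hsq i, hu i]
  field_simp
  ring

theorem mul_one_sub_norm_le_one_sub_sq_norm {q : ℂ → ℂ} (hq : DifferentiableOn ℂ q (ball 0 1))
    (hmap : Set.MapsTo q (ball 0 1) (ball 0 1)) {z : ℂ} (hz : z ∈ ball 0 1) :
    (1 - ‖q 0‖) ^ 2 * (1 - ‖z‖) ≤ 1 - ‖q z‖ ^ 2 := by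
  have hq0 := mem_ball_zero_iff.mp (hmap (mem_ball_self one_pos))
  have hqz := mem_ball_zero_iff.mp (hmap hz)
  have hz' := mem_ball_zero_iff.mp hz
  have hpick := schwarz_pick hq hmap (mem_ball_self one_pos) hz
  simp only [norm_zero, map_zero, zero_mul, sub_zero, norm_one, ne_eq, OfNat.ofNat_ne_zero,
    not_false_eq_true, zero_pow, one_pow, div_one, one_mul] at hpick
  have hden : 1 - ‖q 0‖ ≤ ‖1 - conj (q 0) * q z‖ := by
    have := norm_sub_norm_le (1 : ℂ) (conj (q 0) * q z)
    rw [norm_one, norm_mul, norm_conj] at this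
    nlinarith [norm_nonneg (q 0), norm_nonneg (q z)]
  rw [le_div_iff₀ (pow_pos (lt_of_lt_of_le (by linarith) hden) 2)] at hpick
  calc (1 - ‖q 0‖) ^ 2 * (1 - ‖z‖)
      ≤ ‖1 - conj (q 0) * q z‖ ^ 2 * (1 - ‖z‖ ^ 2) := by
        refine mul_le_mul (pow_le_pow_left₀ (by linarith) hden 2) ?_ (by linarith) (by positivity)
        nlinarith [norm_nonneg z]
    _ ≤ (1 - ‖q 0‖ ^ 2) * (1 - ‖q z‖ ^ 2) := by linarith
    _ ≤ 1 - ‖q z‖ ^ 2 :=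
        mul_le_of_le_one_left (by nlinarith [norm_nonneg (q z)]) (by nlinarith [sq_nonneg ‖q 0‖])

theorem exists_pos_mul_one_sub_norm_le_re {g : ℂ → ℂ} (hg : DifferentiableOn ℂ g (ball 0 1))
    (hre : ∀ u ∈ ball 0 1, 0 < (g u).re) :
    ∃ c > 0, ∀ u ∈ ball 0 1, c * (1 - ‖u‖) ≤ (g u).re := by
  have hne : ∀ u ∈ ball 0 1, g u + 1 ≠ 0 := fun u hu h => by
    have := congrArg re h
    simp only [add_re, one_re, zero_re] at this
    linarith [hre u hu]
  let q := fun u => (g u - 1) / (g u + 1)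
  have hq : ∀ u ∈ ball 0 1, 1 - ‖q u‖ ^ 2 = 4 * (g u).re / ‖g u + 1‖ ^ 2 := fun u hu =>
    one_sub_sq_norm_sub_one_div_add_one (hne u hu)
  have hmap : Set.MapsTo q (ball 0 1) (ball 0 1) := fun u hu => by
    have : 0 < 1 - ‖q u‖ ^ 2 := by
      rw [hq u hu]
      have := hre u hu
      have := hne u hu
      positivity
    rw [mem_ball_zero_iff]
    nlinarith [norm_nonneg (q u)]
  have hqle : ∀ u ∈ ball 0 1, 1 - ‖q u‖ ^ 2 ≤ 4 * (g u).re := fun u hu => by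
    have h1 : 1 ≤ ‖g u + 1‖ := by
      have := re_le_norm (g u + 1)
      rw [add_re, one_re] at this
      linarith [hre u hu]
    rw [hq u hu]
    exact div_le_self (by linarith [hre u hu]) (one_le_pow₀ h1)
  have hq0 : 0 < 1 - ‖q 0‖ := sub_pos.mpr (mem_ball_zero_iff.mp (hmap (mem_ball_self one_pos)))
  refine ⟨(1 - ‖q 0‖) ^ 2 / 4, by positivity, fun u hu => ?_⟩
  have hqd : DifferentiableOn ℂ q (ball 0 1) :=
    (hg.sub_const 1).div (hg.add_const 1) hne
  have := mul_one_sub_norm_le_one_sub_sq_norm hqd hmap hu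
  linarith [hqle u hu]

theorem eqOn_zero_of_re_nonneg_of_isLittleO {g : ℂ → ℂ} (hg : DifferentiableOn ℂ g (ball 0 1))
    (hre : ∀ u ∈ ball 0 1, 0 ≤ (g u).re) {ι : Type*} {l : Filter ι} [l.NeBot] {z : ι → ℂ}
    (hz : ∀ i, z i ∈ ball 0 1) (hgz : (fun i => g (z i)) =o[l] fun i => 1 - ‖z i‖) :
    Set.EqOn g 0 (ball 0 1) := by
  rcases (hg.analyticOnNhd isOpen_ball).is_constant_or_isOpen
    (convex_ball (0 : ℂ) 1).isPreconnected with ⟨c, hc⟩ | hopen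
  · have hbdd : (fun i => 1 - ‖z i‖) =O[l] fun _ => (1 : ℝ) :=
      isBigO_of_le l fun i => by
        have := mem_ball_zero_iff.mp (hz i)
        rw [Real.norm_of_nonneg (by linarith), norm_one]
        linarith [norm_nonneg (z i)]
    have hlim : Tendsto (fun i => g (z i)) l (𝓝 0) :=
      (isLittleO_one_iff ℝ).mp (hgz.trans_isBigO hbdd)
    have hconst : (fun i => g (z i)) = fun _ => c := funext fun i => hc _ (hz i)
    rw [hconst] at hlim
    intro u hu
    rw [hc u hu, tendsto_nhds_unique tendsto_const_nhds hlim, Pi.zero_apply]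
  · exfalso
    have hpos : ∀ u ∈ ball 0 1, 0 < (g u).re := fun u hu => by
      have hsub : g '' ball 0 1 ⊆ interior {w : ℂ | 0 ≤ w.re} :=
        (hopen _ subset_rfl isOpen_ball).subset_interior_iff.mpr
          (Set.image_subset_iff.mpr hre)
      rw [interior_setOfPred_le_re] at hsub
      exact hsub (Set.mem_image_of_mem g hu)
    obtain ⟨c, hc, hcg⟩ := exists_pos_mul_one_sub_norm_le_re hg hpos
    obtain ⟨i, hi⟩ := (hgz.def (half_pos hc)).exists
    have hzi := mem_ball_zero_iff.mp (hz i)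
    rw [Real.norm_of_nonneg (by linarith)] at hi
    nlinarith [hcg _ (hz i), re_le_norm (g (z i))]

theorem isLittleO_one_sub_pow {ι : Type*} {l : Filter ι} {u : ι → ℂ} (hu1 : Tendsto u l (𝓝 1))
    {n : ℕ} (hn : 1 < n) : (fun i => (1 - u i) ^ n) =o[l] fun i => 1 - u i := by
  have h0 : Tendsto (fun i => 1 - u i) l (𝓝 0) := by
    simpa using (tendsto_const_nhds (x := (1 : ℂ))).sub hu1
  simpa [Function.comp_def] using (isLittleO_pow_pow (𝕜 := ℂ) hn).comp_tendsto h0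

theorem isLittleO_cayley_sub_cayley {ι : Type*} {l : Filter ι} {u v : ι → ℂ}
    (hu : ∀ i, u i ≠ 1) (hv : ∀ i, v i ≠ 1) (hu1 : Tendsto u l (𝓝 1))
    (h : (fun i => v i - u i) =o[l] fun i => (1 - u i) ^ 3) :
    (fun i => cayley (v i) - cayley (u i)) =o[l] fun i => 1 - u i := by
  have hequiv : (fun i => 1 - v i) ~[l] fun i => 1 - u i := by
    refine IsLittleO.isEquivalent <|
      (h.trans (isLittleO_one_sub_pow hu1 (by norm_num))).neg_left.congr_left fun i => ?_
    simp only [Pi.sub_apply]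
    ring
  have hinv := ((hequiv.mul (IsEquivalent.refl (u := fun i => 1 - u i))).inv).isBigO
  refine ((h.mul_isBigO hinv).const_mul_left 2).congr' (Eventually.of_forall fun i => ?_)
    (Eventually.of_forall fun i => ?_)
  · simp only [cayley_sub_cayley (hu i) (hv i), Pi.inv_apply, Pi.mul_apply]
    ring
  · simp only [Pi.inv_apply, Pi.mul_apply]
    field_simp [sub_ne_zero.mpr (hu i).symm]

end Complex

open Complex

/-- Proposition 3.2: a holomorphic self-map `f` of the unit disc satisfying
`f z_k = z_k + o(|z_k-1|^3)` along a sequence converging to `1` nontangentially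
is the identity. -/
theorem burns_krantz_disc_nontangential (f : ℂ → ℂ)
    (hf : DifferentiableOn ℂ f (ball (0 : ℂ) 1))
    (hmap : Set.MapsTo f (ball (0 : ℂ) 1) (ball (0 : ℂ) 1))
    (z : ℕ → ℂ) (hz : ∀ k, z k ∈ ball (0 : ℂ) 1)
    (hlim : Tendsto z atTop (nhds 1))
    (hnontan : ∃ C > 0, ∀ k, ‖1 - z k‖ ≤ C * (1 - ‖z k‖))
    (hasym : Tendsto (fun k => (f (z k) - z k) / (‖z k - 1‖ : ℂ) ^ 3)
      atTop (nhds 0)) :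
    ∀ w ∈ ball (0 : ℂ) 1, f w = w := by
  obtain ⟨C, -, hC⟩ := hnontan
  have hd3 : (fun k => f (z k) - z k) =o[atTop] fun k => (1 - z k) ^ 3 := by
    have hden : ∀ k, ((‖z k - 1‖ : ℝ) : ℂ) ^ 3 ≠ 0 := fun k => by
      simpa [sub_eq_zero] using ne_one_of_mem_ball (hz k)
    exact ((isLittleO_iff_tendsto' (Eventually.of_forall fun k h => absurd h (hden k))).mpr
      hasym).trans_isBigO (isBigO_of_le _ fun k => by simp [norm_sub_rev])
  have hz0 : Tendsto (fun k => 1 - z k) atTop (𝓝 0) := by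
    simpa using (tendsto_const_nhds (x := (1 : ℂ))).sub hlim
  have hd1 : (fun k => f (z k) - z k) =o[atTop] fun k => 1 - z k :=
    hd3.trans (isLittleO_one_sub_pow hlim (by norm_num))
  have hstolz : (fun k => 1 - z k) =O[atTop] fun k => 1 - ‖z k‖ :=
    isBigO_of_le' _ fun k => (hC k).trans_eq <| by
      rw [Real.norm_of_nonneg (sub_nonneg.mpr (mem_ball_zero_iff.mp (hz k)).le)]
  have hfz : Tendsto (fun k => f (z k)) atTop (𝓝 1) := by
    simpa using hlim.add (hd1.trans_tendsto hz0)
  have hre : ∀ u ∈ ball (0 : ℂ) 1, 0 ≤ (cayley (f u) - cayley u).re := fun u hu => by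
    have hratio := tendsto_one_sub_sq_norm_div_one_sub_sq_norm
      (fun k => mem_ball_zero_iff.mp (hz k)) (fun k => (mem_ball_zero_iff.mp (hmap (hz k))).le)
      (hd1.trans_isBigO hstolz)
    simpa using re_cayley_le_mul_re_cayley_apply hf hmap hz hlim hfz hratio hu
  have hg := eqOn_zero_of_re_nonneg_of_isLittleO
    ((differentiableOn_cayley.comp hf hmap).sub differentiableOn_cayley) hre hz
    ((isLittleO_cayley_sub_cayley (fun k => ne_one_of_mem_ball (hz k))
      (fun k => ne_one_of_mem_ball (hmap (hz k))) hlim hd3).trans_isBigO hstolz)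
  intro w hw
  have hw1 := ne_one_of_mem_ball hw
  have hfw1 := ne_one_of_mem_ball (hmap hw)
  simpa [cayley_sub_cayley hw1 hfw1, sub_eq_zero, hw1.symm, hfw1.symm] using hg hw
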